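/- (Constant effect two-point formula.) Under the constant effect setup, c equals (μ_t − μ_c) + {p(1−p)}^{−1/2}·[σ₀² − {p·σ_t² + (1−p)·σ_c²}]^{1/2} or (μ_t − μ_c) − {p(1−p)}^{−1/2}·[σ₀² − {p·σ_t² + (1−p)·σ_c²}]^{1/2}, where μ_t = E[Y|Z=1], μ_c = E[Y|Z=0]; in particular σ₀² ≥ p·σ_t² + (1−p)·σ_c². -/

import Mathlib

open MeasureTheory ProbabilityTheory

section Aux

variable {Ω : Type*} [MeasurableSpace Ω]

lemma cond_integral_eq (μ : Measure Ω) (A : Set Ω) (f : Ω → ℝ) :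
    ∫ ω, f ω ∂(μ[|A]) = (μ A).toReal⁻¹ * ∫ ω in A, f ω ∂μ := by
  rw [ProbabilityTheory.cond, integral_smul_measure, ENNReal.toReal_inv, smul_eq_mul]

lemma cond_memℒp (μ : Measure Ω) (A : Set Ω) (hA0 : μ A ≠ 0) {f : Ω → ℝ}
    (hf : MemLp f 2 μ) : MemLp f 2 (μ[|A]) := by
  rw [ProbabilityTheory.cond]
  exact (hf.restrict A).smul_measure (ENNReal.inv_ne_top.mpr hA0)

end Aux

/-- Constant effect two-point formula:
`c = (μ_t − μ_c) ± {p(1−p)}^{−1/2}·[σ₀² − {p σ_t² + (1−p) σ_c²}]^{1/2}`, and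
`σ₀² ≥ p σ_t² + (1−p) σ_c²`. -/
theorem constant_effect_two_point
    {Ω : Type*} [MeasurableSpace Ω] (μ : Measure Ω) [IsProbabilityMeasure μ]
    (Y0 Y1 Z : Ω → ℝ) (hY0 : MemLp Y0 2 μ)
    (c : ℝ) (hc : Y1 = fun ω => Y0 ω + c)
    (hZ : Measurable Z) (hZbin : ∀ ω, Z ω = 0 ∨ Z ω = 1)
    (p : ℝ) (hp : p = (μ (Z ⁻¹' {1})).toReal) (hp0 : 0 < p) (hp1 : p < 1)
    (Y : Ω → ℝ) (hY : Y = fun ω => Z ω * Y1 ω + (1 - Z ω) * Y0 ω)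
    (σt2 σc2 σ02 μt μc : ℝ)
    (hσt2 : σt2 = variance Y (μ[|Z ⁻¹' {1}]))
    (hσc2 : σc2 = variance Y (μ[|Z ⁻¹' {0}]))
    (hσ02 : σ02 = variance Y0 μ)
    (hμt : μt = ∫ ω, Y ω ∂(μ[|Z ⁻¹' {1}]))
    (hμc : μc = ∫ ω, Y ω ∂(μ[|Z ⁻¹' {0}])) :
    (c = (μt - μc) + (p * (1 - p)) ^ (-(1:ℝ)/2) *
          Real.sqrt (σ02 - (p * σt2 + (1 - p) * σc2)) ∨
      c = (μt - μc) - (p * (1 - p)) ^ (-(1:ℝ)/2) *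
          Real.sqrt (σ02 - (p * σt2 + (1 - p) * σc2))) ∧
      p * σt2 + (1 - p) * σc2 ≤ σ02 := by
  set A := Z ⁻¹' {1} with hAdef
  set B := Z ⁻¹' {0} with hBdef
  have hA : MeasurableSet A := hZ (measurableSet_singleton 1)
  have hBc : B = Aᶜ := by
    ext ω
    simp only [hBdef, hAdef, Set.mem_preimage, Set.mem_singleton_iff, Set.mem_compl_iff]
    rcases hZbin ω with h | h <;> simp [h]
  have hA0 : μ A ≠ 0 := by
    intro h
    rw [hp, h] at hp0
    simp at hp0
  have hq : (μ B).toReal = 1 - p := by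
    rw [hBc, prob_compl_eq_one_sub hA, hp,
      ENNReal.toReal_sub_of_le prob_le_one (by simp)]
    simp
  have hq0 : (0:ℝ) < 1 - p := by linarith
  have hB0 : μ B ≠ 0 := by
    intro h
    rw [h] at hq
    simp at hq
    linarith
  -- Y = Y0 + c·Z
  have hYonA : Set.EqOn Y (fun ω => Y0 ω + c) A := by
    intro ω hω
    have h1 : Z ω = 1 := hω
    simp [hY, hc, h1]
  have hYonB : Set.EqOn Y Y0 B := by
    intro ω hω
    have h1 : Z ω = 0 := hω
    simp [hY, hc, h1]
  have hMZ : MemLp (fun ω => c * Z ω) 2 μ := by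
    refine MemLp.of_bound ((hZ.const_mul c).aestronglyMeasurable) |c|
      (ae_of_all _ fun ω => ?_)
    rcases hZbin ω with h | h <;> simp [h, Real.norm_eq_abs, abs_nonneg]
  have hMemY : MemLp Y 2 μ := by
    have hYeq : Y = fun ω => Y0 ω + c * Z ω := by
      funext ω
      rcases hZbin ω with h | h <;> · simp only [hY, hc, h]; ring
    rw [hYeq]
    exact hY0.add hMZ
  -- integrability
  have hIntY0 : Integrable Y0 μ := hY0.integrable one_le_two
  have hIntY0sq : Integrable (fun ω => Y0 ω ^ 2) μ := hY0.integrable_sq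
  -- abbreviations
  set IA := ∫ ω in A, Y0 ω ∂μ with hIA
  set IB := ∫ ω in B, Y0 ω ∂μ with hIB
  set JA := ∫ ω in A, Y0 ω ^ 2 ∂μ with hJA
  set JB := ∫ ω in B, Y0 ω ^ 2 ∂μ with hJB
  -- set integrals of Y and Y² on A and B
  have hintA : ∫ ω in A, Y ω ∂μ = IA + c * p := by
    rw [setIntegral_congr_fun hA hYonA,
      integral_add (hIntY0.restrict) (integrable_const c), setIntegral_const, measureReal_def, hp,
      smul_eq_mul]
    ring
  have hintB : ∫ ω in B, Y ω ∂μ = IB := by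
    rw [setIntegral_congr_fun (hZ (measurableSet_singleton 0)) hYonB]
  have hYsqOnA : Set.EqOn (fun ω => Y ω ^ 2) (fun ω => Y0 ω ^ 2 + (2 * c) * Y0 ω + c ^ 2) A := by
    intro ω hω
    simp only
    rw [hYonA hω]
    ring
  have hYsqOnB : Set.EqOn (fun ω => Y ω ^ 2) (fun ω => Y0 ω ^ 2) B := by
    intro ω hω
    simp only
    rw [hYonB hω]
  have hintA2 : ∫ ω in A, Y ω ^ 2 ∂μ = JA + 2 * c * IA + c ^ 2 * p := by
    have hI1 : Integrable (fun ω => Y0 ω ^ 2 + 2 * c * Y0 ω) (μ.restrict A) :=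
      (hIntY0sq.restrict).add ((hIntY0.restrict).const_mul (2 * c))
    rw [setIntegral_congr_fun hA hYsqOnA,
      integral_add hI1 (integrable_const _),
      integral_add (hIntY0sq.restrict) ((hIntY0.restrict).const_mul (2 * c)),
      integral_const_mul, setIntegral_const, measureReal_def, hp, smul_eq_mul]
    ring
  have hintB2 : ∫ ω in B, Y ω ^ 2 ∂μ = JB := by
    rw [setIntegral_congr_fun (hZ (measurableSet_singleton 0)) hYsqOnB]
  -- conditional probability measures
  haveI hPA : IsProbabilityMeasure (μ[|A]) := cond_isProbabilityMeasure hA0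
  haveI hPB : IsProbabilityMeasure (μ[|B]) := cond_isProbabilityMeasure hB0
  have hMemYA : MemLp Y 2 (μ[|A]) := cond_memℒp μ A hA0 hMemY
  have hMemYB : MemLp Y 2 (μ[|B]) := cond_memℒp μ B hB0 hMemY
  -- means
  have hμt' : μt = p⁻¹ * (IA + c * p) := by
    rw [hμt, cond_integral_eq, hintA, hp]
  have hμc' : μc = (1 - p)⁻¹ * IB := by
    rw [hμc, cond_integral_eq, hintB, hq]
  -- variances
  have hσt2' : σt2 = p⁻¹ * (JA + 2 * c * IA + c ^ 2 * p) - (p⁻¹ * (IA + c * p)) ^ 2 := by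
    rw [hσt2, variance_eq_sub hMemYA]
    simp only [Pi.pow_apply]
    rw [cond_integral_eq, cond_integral_eq, hintA, hintA2, hp]
  have hσc2' : σc2 = (1 - p)⁻¹ * JB - ((1 - p)⁻¹ * IB) ^ 2 := by
    rw [hσc2, variance_eq_sub hMemYB]
    simp only [Pi.pow_apply]
    rw [cond_integral_eq, cond_integral_eq, hintB, hintB2, hq]
  have htotal1 : ∫ ω, Y0 ω ∂μ = IA + IB := by
    rw [← integral_add_compl hA hIntY0, ← hBc]
  have htotal2 : ∫ ω, Y0 ω ^ 2 ∂μ = JA + JB := by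
    rw [← integral_add_compl hA hIntY0sq, ← hBc]
  have hσ02' : σ02 = (JA + JB) - (IA + IB) ^ 2 := by
    rw [hσ02, variance_eq_sub hY0]
    simp only [Pi.pow_apply]
    rw [htotal1, htotal2]
  -- key algebraic identity
  have hd : σ02 - (p * σt2 + (1 - p) * σc2) = p * (1 - p) * (μt - μc - c) ^ 2 := by
    rw [hσ02', hσt2', hσc2', hμt', hμc']
    field_simp
    ring
  have hD0 : 0 ≤ σ02 - (p * σt2 + (1 - p) * σc2) := by
    rw [hd]
    positivity
  refine ⟨?_, by linarith⟩
  have hsq : Real.sqrt (σ02 - (p * σt2 + (1 - p) * σc2))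
      = Real.sqrt (p * (1 - p)) * |μt - μc - c| := by
    rw [hd, Real.sqrt_mul (by positivity), Real.sqrt_sq_eq_abs]
  have hrp : (p * (1 - p)) ^ (-(1:ℝ)/2) = (Real.sqrt (p * (1 - p)))⁻¹ := by
    rw [Real.sqrt_eq_rpow, ← Real.rpow_neg (by positivity)]
    norm_num
  have hsne : Real.sqrt (p * (1 - p)) ≠ 0 := by positivity
  have hfinal : (p * (1 - p)) ^ (-(1:ℝ)/2)
      * Real.sqrt (σ02 - (p * σt2 + (1 - p) * σc2)) = |μt - μc - c| := by
    rw [hsq, hrp, ← mul_assoc, inv_mul_cancel₀ hsne, one_mul]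
  rcases abs_cases (μt - μc - c) with ⟨h1, _⟩ | ⟨h1, _⟩
  · right
    rw [hfinal, h1]
    ring
  · left
    rw [hfinal, h1]
    ring
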